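/- arXiv:2203.08328 — 8 statements merged into one kernel-verified Lean document; each statement's English description precedes it below -/
import Mathlib

section
/- Let d ≥ 2 and δ ≥ 1 be integers, r = 1/4, ε = r²/((d-1)δ²). For any a ∈ ℝᵈ, any x ∈ {1,…,δ}ᵈ, and any i ∈ {1,…,d}, the Euclidean distance between C = a + ε·x and B⁻ = a - r(1-ε)·eᵢ - 2εδ·(𝟙-eᵢ) is strictly less than 2r. -/
lemma stmt5_aux (ε D r : ℝ) (hr : r = 1 / 4) (hεpos : 0 < ε) (hD : 0 ≤ D)
    (hεr2 : ε ≤ r ^ 2) (hDle : D ≤ r ^ 2) :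
    (D + r * (1 - ε)) ^ 2 + 9 * ε * r ^ 2 < (2 * r) ^ 2 := by
  subst hr
  nlinarith [mul_le_mul_of_nonneg_left hDle hD,
    mul_le_mul_of_nonneg_left hεr2 hεpos.le,
    mul_nonneg hD hεpos.le]

theorem stmt5 (d δ : ℕ) (hd : 2 ≤ d) (hδ : 1 ≤ δ) (r ε : ℝ)
    (hr : r = 1 / 4) (hε : ε = r ^ 2 / (((d : ℝ) - 1) * (δ : ℝ) ^ 2))
    (a : EuclideanSpace ℝ (Fin d)) (i : Fin d) (x : Fin d → ℕ)
    (hx : ∀ j, 1 ≤ x j ∧ x j ≤ δ)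
    (C Bm : EuclideanSpace ℝ (Fin d))
    (hC : C = fun j => a j + ε * (x j : ℝ))
    (hBm : Bm = fun j => if j = i then a j - r * (1 - ε) else a j - 2 * ε * δ) :
    dist C Bm < 2 * r := by
  have hd1 : (1 : ℝ) ≤ (d : ℝ) - 1 := by
    have : (2 : ℝ) ≤ d := by exact_mod_cast hd
    linarith
  have hδ1 : (1 : ℝ) ≤ (δ : ℝ) := by exact_mod_cast hδ
  have hεpos : 0 < ε := by
    rw [hε, hr]; positivity
  have hεle : ε * (((d : ℝ) - 1) * (δ : ℝ) ^ 2) = r ^ 2 := by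
    rw [hε]; field_simp
  have hone : 1 ≤ ((d : ℝ) - 1) * (δ : ℝ) ^ 2 := by nlinarith
  have hδd : (δ : ℝ) ≤ ((d : ℝ) - 1) * (δ : ℝ) ^ 2 := by nlinarith
  have hεr2 : ε ≤ r ^ 2 := by nlinarith
  have hEle : ε * δ ≤ r ^ 2 := by nlinarith
  -- sum bound
  have hdist : dist C Bm = Real.sqrt (∑ j, (C j - Bm j) ^ 2) := by
    rw [EuclideanSpace.dist_eq]
    congr 1
    apply Finset.sum_congr rfl
    intro j _
    rw [Real.dist_eq, sq_abs]
  have hterm : ∀ j, (C j - Bm j) ^ 2 = if j = i then (ε * x j + r * (1 - ε)) ^ 2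
      else (ε * x j + 2 * ε * δ) ^ 2 := by
    intro j
    simp only [hC, hBm]
    by_cases h : j = i <;> simp [h] <;> ring
  have hsum : ∑ j, (C j - Bm j) ^ 2
      ≤ (ε * δ + r * (1 - ε)) ^ 2 + ((d : ℝ) - 1) * (3 * ε * δ) ^ 2 := by
    have hsplit : ∑ j, (C j - Bm j) ^ 2 =
        (C i - Bm i) ^ 2 + ∑ j ∈ Finset.univ.erase i, (C j - Bm j) ^ 2 :=
      (Finset.add_sum_erase _ _ (Finset.mem_univ i)).symm
    rw [hsplit]
    have h1 : (C i - Bm i) ^ 2 ≤ (ε * δ + r * (1 - ε)) ^ 2 := by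
      rw [hterm i, if_pos rfl]
      have hxi : (x i : ℝ) ≤ δ := by exact_mod_cast (hx i).2
      have hxi0 : (0 : ℝ) ≤ x i := Nat.cast_nonneg _
      have hre : 0 ≤ r * (1 - ε) := by
        rw [hr] at *; nlinarith
      apply pow_le_pow_left₀ (by positivity)
      linarith [mul_le_mul_of_nonneg_left hxi hεpos.le]
    have h2 : ∑ j ∈ Finset.univ.erase i, (C j - Bm j) ^ 2
        ≤ ((d : ℝ) - 1) * (3 * ε * δ) ^ 2 := by
      have hcard : (Finset.univ.erase i).card = d - 1 := by
        rw [Finset.card_erase_of_mem (Finset.mem_univ i), Finset.card_univ, Fintype.card_fin]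
      calc ∑ j ∈ Finset.univ.erase i, (C j - Bm j) ^ 2
          ≤ ∑ j ∈ Finset.univ.erase i, (3 * ε * δ) ^ 2 := by
            apply Finset.sum_le_sum
            intro j hj
            have hji : j ≠ i := Finset.ne_of_mem_erase hj
            rw [hterm j, if_neg hji]
            have hxj : (x j : ℝ) ≤ δ := by exact_mod_cast (hx j).2
            have hxj0 : (0 : ℝ) ≤ x j := Nat.cast_nonneg _
            apply pow_le_pow_left₀ (by positivity)
            nlinarith
        _ = ((d : ℝ) - 1) * (3 * ε * δ) ^ 2 := by
            rw [Finset.sum_const, hcard, nsmul_eq_mul]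
            congr 1
            have : 1 ≤ d := le_trans (by norm_num) hd
            push_cast [Nat.cast_sub this]
            ring
    linarith
  have hbound : ∑ j, (C j - Bm j) ^ 2 < (2 * r) ^ 2 := by
    have h9 : ((d : ℝ) - 1) * (3 * ε * δ) ^ 2 = 9 * ε * r ^ 2 := by
      have : ((d : ℝ) - 1) * (3 * ε * δ) ^ 2 = 9 * ε * (ε * (((d : ℝ) - 1) * (δ : ℝ) ^ 2)) := by
        ring
      rw [this, hεle]
    rw [h9] at hsum
    have hεE : 0 ≤ ε * δ := by positivity
    have hkey := stmt5_aux ε (ε * δ) r hr hεpos hεE hεr2 hEle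
    linarith
  rw [hdist]
  have h2r : 0 < 2 * r := by rw [hr]; norm_num
  calc Real.sqrt (∑ j, (C j - Bm j) ^ 2) < Real.sqrt ((2 * r) ^ 2) :=
        Real.sqrt_lt_sqrt (by positivity) hbound
    _ = 2 * r := Real.sqrt_sq h2r.le
end

section
/- Let d ≥ 2 and δ ≥ 1 be integers, r = 1/4, ε = r²/((d-1)δ²). Let a ∈ ℝᵈ, i ∈ {1,…,d}, x ∈ {1,…,δ}ᵈ, and ℓ ∈ {1,…,δ} with ℓ ≤ x[i]. Then the Euclidean distance between C = a + ε·x and S = a + ((1-ε)·2r + εℓ)·eᵢ is strictly less than 2r. -/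
/-!
The core point `C` moves away from `a` by `ε·x`, the secondary point `S` by `(1 - ε)·2r + εℓ`
along `eᵢ`. In coordinate `i` the two displacements differ by `(1 - ε)·2r - ε(x[i] - ℓ)`, which lies
in `[0, (1 - ε)·2r]` because `ℓ ≤ x[i] ≤ δ` and `εδ ≤ r²` is small; in each of the other `d - 1`
coordinates they differ by at most `εδ`. The choice of `ε` makes `(d - 1)(εδ)² = εr²`, so
`dist² ≤ (2r)²((1 - ε)² + ε/4) < (2r)²`.
-/

theorem EuclideanSpace.dist_sq_le_of_abs_sub_le {ι : Type*} [Fintype ι] [DecidableEq ι]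
    (u v : EuclideanSpace ℝ ι) (i : ι) {A B : ℝ} (hi : |u i - v i| ≤ A)
    (hj : ∀ j ≠ i, |u j - v j| ≤ B) :
    dist u v ^ 2 ≤ A ^ 2 + ((Fintype.card ι : ℝ) - 1) * B ^ 2 := by
  have hsq {t c : ℝ} (h : |t| ≤ c) : t ^ 2 ≤ c ^ 2 :=
    sq_abs t ▸ pow_le_pow_left₀ (abs_nonneg t) h 2
  rw [EuclideanSpace.dist_eq, Real.sq_sqrt (by positivity),
    ← Finset.add_sum_erase _ _ (Finset.mem_univ i)]
  simp only [Real.dist_eq, sq_abs]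
  refine add_le_add (hsq hi) ?_
  calc ∑ j ∈ Finset.univ.erase i, (u j - v j) ^ 2
      ≤ (Finset.univ.erase i).card • B ^ 2 :=
        Finset.sum_le_card_nsmul _ _ _ fun j hj' => hsq (hj j (Finset.ne_of_mem_erase hj'))
    _ = ((Fintype.card ι : ℝ) - 1) * B ^ 2 := by
        rw [Finset.card_erase_of_mem (Finset.mem_univ i), Finset.card_univ, nsmul_eq_mul,
          Nat.cast_pred (Fintype.card_pos_iff.mpr ⟨i⟩)]

section

variable {d δ r : ℝ}

theorem sub_one_mul_div_mul_sq_eq (hd : d ≠ 1) (hδ : δ ≠ 0) :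
    (d - 1) * (r ^ 2 / ((d - 1) * δ ^ 2) * δ) ^ 2 = r ^ 2 / ((d - 1) * δ ^ 2) * r ^ 2 := by
  have : d - 1 ≠ 0 := sub_ne_zero.mpr hd
  field_simp

theorem div_sub_one_mul_sq_mul_le (hd : 2 ≤ d) (hδ : 1 ≤ δ) :
    r ^ 2 / ((d - 1) * δ ^ 2) * δ ≤ r ^ 2 := by
  have hδ0 : δ ≠ 0 := by positivity
  rw [sq δ, ← mul_assoc, ← div_div, div_mul_cancel₀ _ hδ0]
  exact div_le_self (sq_nonneg r) (by nlinarith)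

end

theorem stmt7_general (d δ : ℕ) (hd : 2 ≤ d) (r ε : ℝ)
    (hr : r = 1 / 4) (hε : ε = r ^ 2 / (((d : ℝ) - 1) * (δ : ℝ) ^ 2))
    (a : EuclideanSpace ℝ (Fin d)) (i : Fin d) (x : Fin d → ℕ) (ℓ : ℕ)
    (hx : ∀ j, 1 ≤ x j ∧ x j ≤ δ) (hℓx : ℓ ≤ x i)
    (C S : EuclideanSpace ℝ (Fin d))
    (hC : C = fun j => a j + ε * (x j : ℝ))
    (hS : S = fun j => if j = i then a j + ((1 - ε) * (2 * r) + ε * ℓ) else a j) :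
    dist C S < 2 * r := by
  have hd2 : (2 : ℝ) ≤ d := by exact_mod_cast hd
  have hδ : (1 : ℝ) ≤ δ := by exact_mod_cast (hx i).1.trans (hx i).2
  have hε0 : 0 < ε :=
    hε ▸ div_pos (by rw [hr]; norm_num) (mul_pos (by linarith) (by positivity))
  have hxδ (j : Fin d) : ε * x j ≤ ε * δ := by gcongr; exact_mod_cast (hx j).2
  have hεδ : ε * δ ≤ r ^ 2 := hε ▸ div_sub_one_mul_sq_mul_le hd2 hδ
  have hi : |C i - S i| ≤ (1 - ε) * (2 * r) := by
    have hℓx' : (ℓ : ℝ) ≤ x i := by exact_mod_cast hℓx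
    rw [congrFun hC i, congrFun hS i, if_pos rfl,
      show ∀ c s t u : ℝ, c + t - (c + (s + u)) = (t - u) - s by intros; ring, ← mul_sub]
    refine abs_sub_le_of_nonneg_of_le (mul_nonneg hε0.le (sub_nonneg.mpr hℓx')) ?_
      (by nlinarith) le_rfl
    nlinarith [hxδ i]
  have hj (j : Fin d) (hji : j ≠ i) : |C j - S j| ≤ ε * δ := by
    rw [congrFun hC j, congrFun hS j, if_neg hji, add_sub_cancel_left,
      abs_of_nonneg (mul_nonneg hε0.le (Nat.cast_nonneg _))]
    exact hxδ j
  have hsum : ((d : ℝ) - 1) * (ε * δ) ^ 2 = ε * r ^ 2 :=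
    hε ▸ sub_one_mul_div_mul_sq_eq (by linarith) (by positivity)
  have hdist : dist C S ^ 2 < (2 * r) ^ 2 :=
    calc dist C S ^ 2 ≤ ((1 - ε) * (2 * r)) ^ 2 + ((d : ℝ) - 1) * (ε * δ) ^ 2 := by
          simpa using EuclideanSpace.dist_sq_le_of_abs_sub_le C S i hi hj
      _ = (2 * r) ^ 2 * ((1 - ε) ^ 2 + ε / 4) := by rw [hsum]; ring
      _ < (2 * r) ^ 2 := by subst hr; nlinarith
  exact (pow_lt_pow_iff_left₀ dist_nonneg (by positivity) two_ne_zero).mp hdist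

theorem stmt7 (d δ : ℕ) (hd : 2 ≤ d) (hδ : 1 ≤ δ) (r ε : ℝ)
    (hr : r = 1 / 4) (hε : ε = r ^ 2 / (((d : ℝ) - 1) * (δ : ℝ) ^ 2))
    (a : EuclideanSpace ℝ (Fin d)) (i : Fin d) (x : Fin d → ℕ) (ℓ : ℕ)
    (hx : ∀ j, 1 ≤ x j ∧ x j ≤ δ) (hℓ1 : 1 ≤ ℓ) (hℓδ : ℓ ≤ δ) (hℓx : ℓ ≤ x i)
    (C S : EuclideanSpace ℝ (Fin d))
    (hC : C = fun j => a j + ε * (x j : ℝ))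
    (hS : S = fun j => if j = i then a j + ((1 - ε) * (2 * r) + ε * ℓ) else a j) :
    dist C S < 2 * r :=
  stmt7_general d δ hd r ε hr hε a i x ℓ hx hℓx C S hC hS
end

section
/- Let d ≥ 2 and δ ≥ 1 be integers, r = 1/4, ε = r²/((d-1)δ²). Let a ∈ ℝᵈ, i ∈ {1,…,d}, x ∈ {1,…,δ}ᵈ, and ℓ ∈ {1,…,δ} with ℓ > x[i]. Then the Euclidean distance between C = a + ε·x and S = a + ((1-ε)·2r + εℓ)·eᵢ is at least 2r(1+ε). -/
theorem stmt8 (d δ : ℕ) (hd : 2 ≤ d) (hδ : 1 ≤ δ) (r ε : ℝ)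
    (hr : r = 1 / 4) (hε : ε = r ^ 2 / (((d : ℝ) - 1) * (δ : ℝ) ^ 2))
    (a : EuclideanSpace ℝ (Fin d)) (i : Fin d) (x : Fin d → ℕ) (ℓ : ℕ)
    (hx : ∀ j, 1 ≤ x j ∧ x j ≤ δ) (hℓ1 : 1 ≤ ℓ) (hℓδ : ℓ ≤ δ) (hℓx : x i < ℓ)
    (C S : EuclideanSpace ℝ (Fin d))
    (hC : C = fun j => a j + ε * (x j : ℝ))
    (hS : S = fun j => if j = i then a j + ((1 - ε) * (2 * r) + ε * ℓ) else a j) :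
    2 * r * (1 + ε) ≤ dist C S := by
  have hd1 : (1 : ℝ) ≤ (d : ℝ) - 1 := by
    have : (2 : ℝ) ≤ (d : ℝ) := by exact_mod_cast hd
    linarith
  have hδ1 : (1 : ℝ) ≤ (δ : ℝ) := by exact_mod_cast hδ
  have hden : (1 : ℝ) ≤ ((d : ℝ) - 1) * (δ : ℝ) ^ 2 := by nlinarith
  have hε0 : 0 ≤ ε := by
    rw [hε]; positivity
  have hε1 : ε ≤ 1 := by
    rw [hε, hr]
    rw [div_le_one (by linarith)]
    nlinarith
  have hℓxi : (x i : ℝ) + 1 ≤ (ℓ : ℝ) := by exact_mod_cast hℓx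
  -- the i-th coordinate difference
  have key : 2 * r * (1 + ε) ≤ |C i - S i| := by
    rw [hC, hS]
    simp only [eq_self_iff_true, if_true]
    have heq : a i + ε * (x i : ℝ) - (a i + ((1 - ε) * (2 * r) + ε * ℓ))
        = -((1 - ε) * (2 * r) + ε * ((ℓ : ℝ) - x i)) := by ring
    rw [heq, abs_neg, abs_of_nonneg (by nlinarith [mul_nonneg hε0 (by linarith : (0:ℝ) ≤ (ℓ:ℝ) - x i)])]
    nlinarith [mul_le_mul_of_nonneg_left (by linarith : (1:ℝ) ≤ (ℓ:ℝ) - x i) hε0]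
  have hdist : |C i - S i| ≤ dist C S := by
    rw [EuclideanSpace.dist_eq]
    have h1 : |C i - S i| = Real.sqrt ((C i - S i) ^ 2) := (Real.sqrt_sq_eq_abs _).symm
    rw [h1]
    apply Real.sqrt_le_sqrt
    have := Finset.single_le_sum (f := fun j => dist (C j) (S j) ^ 2)
      (fun j _ => sq_nonneg _) (Finset.mem_univ i)
    simpa [Real.dist_eq, sq_abs] using this
  linarith
end

section
/- Let d ≥ 2 and δ ≥ 1 be integers, r = 1/4, ε = r²/((d-1)δ²). Let a ∈ ℝᵈ, i ∈ {1,…,d}, a' = a + eᵢ, y ∈ {1,…,δ}ᵈ, and ℓ ∈ {1,…,δ} with ℓ > y[i]. Then the Euclidean distance between C' = a' + ε·y and S = a + ((1-ε)·2r + εℓ)·eᵢ is strictly less than 2r. -/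
set_option maxHeartbeats 1000000 in
theorem stmt9 (d δ : ℕ) (hd : 2 ≤ d) (hδ : 1 ≤ δ) (r ε : ℝ)
    (hr : r = 1 / 4) (hε : ε = r ^ 2 / (((d : ℝ) - 1) * (δ : ℝ) ^ 2))
    (a : EuclideanSpace ℝ (Fin d)) (i : Fin d) (y : Fin d → ℕ) (ℓ : ℕ)
    (hy : ∀ j, 1 ≤ y j ∧ y j ≤ δ) (hℓ1 : 1 ≤ ℓ) (hℓδ : ℓ ≤ δ) (hℓy : y i < ℓ)
    (C' S : EuclideanSpace ℝ (Fin d))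
    (hC' : C' = fun j => (if j = i then a j + 1 else a j) + ε * (y j : ℝ))
    (hS : S = fun j => if j = i then a j + ((1 - ε) * (2 * r) + ε * ℓ) else a j) :
    dist C' S < 2 * r := by
  have hd1 : (1 : ℝ) ≤ (d : ℝ) - 1 := by
    have : (2 : ℝ) ≤ (d : ℝ) := by exact_mod_cast hd
    linarith
  have hδ1 : (1 : ℝ) ≤ (δ : ℝ) := by exact_mod_cast hδ
  have hden : 0 < ((d : ℝ) - 1) * (δ : ℝ) ^ 2 := by nlinarith
  have hεpos : 0 < ε := by
    rw [hε, hr]; positivity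
  have hkey : ε * (((d : ℝ) - 1) * (δ : ℝ) ^ 2) = 1 / 16 := by
    rw [hε, hr]; field_simp; ring
  have hεδ : ε * (δ : ℝ) ≤ 1 / 16 := by
    have : (δ : ℝ) ≤ ((d : ℝ) - 1) * (δ : ℝ) ^ 2 := by nlinarith
    nlinarith
  have hε16 : ε ≤ 1 / 16 := by nlinarith
  have hyi : (1 : ℝ) ≤ (y i : ℝ) := by exact_mod_cast (hy i).1
  have hℓR : (y i : ℝ) + 1 ≤ (ℓ : ℝ) := by exact_mod_cast hℓy
  have hℓδR : (ℓ : ℝ) ≤ (δ : ℝ) := by exact_mod_cast hℓδ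
  rw [EuclideanSpace.dist_eq, hr]
  rw [show (2 : ℝ) * (1 / 4) = 1 / 2 by norm_num]
  rw [Real.sqrt_lt' (by norm_num : (0:ℝ) < 1/2)]
  simp only [Real.dist_eq, sq_abs]
  have hsum : ∑ j, (C' j - S j) ^ 2
      = (C' i - S i) ^ 2 + ∑ j ∈ Finset.univ.erase i, (C' j - S j) ^ 2 :=
    (Finset.add_sum_erase Finset.univ (fun j => (C' j - S j) ^ 2) (Finset.mem_univ i)).symm
  rw [hsum]
  -- bound the i term
  have hterm : C' i - S i = 1 / 2 - ε * ((ℓ : ℝ) - (y i : ℝ) - 1 / 2) := by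
    rw [hC', hS, hr]; simp; ring
  have hi_bound : (C' i - S i) ^ 2 ≤ (1 / 2 - ε / 2) ^ 2 := by
    rw [hterm]
    have h1 : 0 ≤ 1 / 2 - ε * ((ℓ : ℝ) - (y i : ℝ) - 1 / 2) := by
      have : ε * ((ℓ : ℝ) - (y i : ℝ) - 1 / 2) ≤ ε * (δ : ℝ) := by
        apply mul_le_mul_of_nonneg_left _ hεpos.le
        linarith
      linarith
    have h2 : 1 / 2 - ε * ((ℓ : ℝ) - (y i : ℝ) - 1 / 2) ≤ 1 / 2 - ε / 2 := by
      have : ε * (1 / 2) ≤ ε * ((ℓ : ℝ) - (y i : ℝ) - 1 / 2) := by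
        apply mul_le_mul_of_nonneg_left _ hεpos.le
        linarith
      linarith
    exact pow_le_pow_left₀ h1 h2 2
  have hrest : ∑ j ∈ Finset.univ.erase i, (C' j - S j) ^ 2
      ≤ ((d : ℝ) - 1) * (ε ^ 2 * (δ : ℝ) ^ 2) := by
    have hcard : (Finset.univ.erase i).card = d - 1 := by
      simp [Finset.card_erase_of_mem]
    calc ∑ j ∈ Finset.univ.erase i, (C' j - S j) ^ 2
        ≤ ∑ _j ∈ Finset.univ.erase i, ε ^ 2 * (δ : ℝ) ^ 2 := by
          apply Finset.sum_le_sum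
          intro j hj
          have hji : j ≠ i := Finset.ne_of_mem_erase hj
          have : C' j - S j = ε * (y j : ℝ) := by
            rw [hC', hS]; simp [hji]
          rw [this, mul_pow]
          have hyj : (y j : ℝ) ≤ (δ : ℝ) := by exact_mod_cast (hy j).2
          have hyj0 : (0 : ℝ) ≤ (y j : ℝ) := by positivity
          exact mul_le_mul_of_nonneg_left (pow_le_pow_left₀ hyj0 hyj 2) (by positivity)
      _ = ((d : ℝ) - 1) * (ε ^ 2 * (δ : ℝ) ^ 2) := by
          rw [Finset.sum_const, hcard, nsmul_eq_mul]
          have : ((d - 1 : ℕ) : ℝ) = (d : ℝ) - 1 := by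
            have : 1 ≤ d := by omega
            push_cast [this]; ring
          rw [this]
      _ = ((d : ℝ) - 1) * (ε ^ 2 * (δ : ℝ) ^ 2) := rfl
  have hrest' : ∑ j ∈ Finset.univ.erase i, (C' j - S j) ^ 2 ≤ ε / 16 := by
    have : ((d : ℝ) - 1) * (ε ^ 2 * (δ : ℝ) ^ 2) = ε * (ε * (((d : ℝ) - 1) * (δ : ℝ) ^ 2)) := by
      ring
    rw [this, hkey] at hrest
    linarith
  nlinarith [hi_bound, hrest', hεpos, hε16, sq_nonneg ε]
end

section
/- Let d ≥ 2 and δ ≥ 1 be integers, r = 1/4, ε = r²/((d-1)δ²). Let a ∈ ℝᵈ, i ∈ {1,…,d}, a' = a + eᵢ, y ∈ {1,…,δ}ᵈ, and ℓ ∈ {1,…,δ} with ℓ ≤ y[i]. Then the Euclidean distance between C' = a' + ε·y and S = a + ((1-ε)·2r + εℓ)·eᵢ is at least 2r(1+ε). -/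
theorem stmt10 (d δ : ℕ) (hd : 2 ≤ d) (hδ : 1 ≤ δ) (r ε : ℝ)
    (hr : r = 1 / 4) (hε : ε = r ^ 2 / (((d : ℝ) - 1) * (δ : ℝ) ^ 2))
    (a : EuclideanSpace ℝ (Fin d)) (i : Fin d) (y : Fin d → ℕ) (ℓ : ℕ)
    (hy : ∀ j, 1 ≤ y j ∧ y j ≤ δ) (hℓ1 : 1 ≤ ℓ) (hℓδ : ℓ ≤ δ) (hℓy : ℓ ≤ y i)
    (C' S : EuclideanSpace ℝ (Fin d))
    (hC' : C' = fun j => (if j = i then a j + 1 else a j) + ε * (y j : ℝ))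
    (hS : S = fun j => if j = i then a j + ((1 - ε) * (2 * r) + ε * ℓ) else a j) :
    2 * r * (1 + ε) ≤ dist C' S := by
  have hε0 : 0 ≤ ε := by
    rw [hε, hr]
    apply div_nonneg (by positivity)
    have : (2:ℝ) ≤ (d:ℝ) := by exact_mod_cast hd
    have : (1:ℝ) ≤ (δ:ℝ) := by exact_mod_cast hδ
    nlinarith
  have key : 2 * r * (1 + ε) ≤ |C' i - S i| := by
    have hyl : (ℓ:ℝ) ≤ (y i : ℝ) := by exact_mod_cast hℓy
    rw [hC', hS]
    simp only [eq_self_iff_true, if_true]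
    rw [hr]
    rw [abs_of_nonneg (by nlinarith)]
    nlinarith
  calc 2 * r * (1 + ε) ≤ |C' i - S i| := key
    _ ≤ dist C' S := by
        rw [EuclideanSpace.dist_eq]
        have : |C' i - S i| = Real.sqrt ((C' i - S i)^2) := (Real.sqrt_sq_eq_abs _).symm
        rw [this]
        apply Real.sqrt_le_sqrt
        have := Finset.single_le_sum (f := fun j => dist (C' j) (S j) ^ 2)
          (fun j _ => by positivity) (Finset.mem_univ i)
        simpa [Real.dist_eq, sq_abs] using this
end

section
/- Let d ≥ 2 and δ ≥ 1 be integers, r = 1/4, ε = r²/((d-1)δ²). Let a, a'' ∈ ℤᵈ with a''[j] = a[j] for all j ≠ i and a''[i] ≤ a[i] - 1 for some i ∈ {1,…,d}. Then for any x ∈ {1,…,δ}ᵈ and ℓ ∈ {1,…,δ}, the Euclidean distance between p = a'' + ε·x and q = a + ((1-ε)·2r + εℓ)·eᵢ is strictly greater than 2r(1+ε). -/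
theorem stmt11 (d δ : ℕ) (hd : 2 ≤ d) (hδ : 1 ≤ δ) (r ε : ℝ)
    (hr : r = 1 / 4) (hε : ε = r ^ 2 / (((d : ℝ) - 1) * (δ : ℝ) ^ 2))
    (a a'' : Fin d → ℤ) (i : Fin d)
    (hj : ∀ j, j ≠ i → a'' j = a j) (hi : a'' i ≤ a i - 1)
    (x : Fin d → ℕ) (ℓ : ℕ)
    (hx : ∀ j, 1 ≤ x j ∧ x j ≤ δ) (hℓ1 : 1 ≤ ℓ) (hℓδ : ℓ ≤ δ)
    (p q : EuclideanSpace ℝ (Fin d))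
    (hp : p = fun j => (a'' j : ℝ) + ε * (x j : ℝ))
    (hq : q = fun j => if j = i then (a j : ℝ) + ((1 - ε) * (2 * r) + ε * ℓ) else (a j : ℝ)) :
    2 * r * (1 + ε) < dist p q := by
  have hd1 : (1:ℝ) ≤ (d:ℝ) - 1 := by
    have : (2:ℝ) ≤ (d:ℝ) := by exact_mod_cast hd
    linarith
  have hδ1 : (1:ℝ) ≤ (δ:ℝ) := by exact_mod_cast hδ
  have hεpos : 0 < ε := by
    rw [hε, hr]
    positivity
  have hεδ : ε * δ ≤ 1 / 16 := by
    rw [hε, hr]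
    rw [div_mul_eq_mul_div, div_le_iff₀ (by positivity)]
    nlinarith
  -- coordinate bound
  have hcoord : |p i - q i| ≤ dist p q := by
    rw [EuclideanSpace.dist_eq]
    have h1 : dist (p i) (q i) ^ 2 ≤ ∑ j, dist (p j) (q j) ^ 2 :=
      Finset.single_le_sum (f := fun j => dist (p j) (q j) ^ 2) (fun j _ => sq_nonneg _) (Finset.mem_univ i)
    calc |p i - q i| = Real.sqrt (dist (p i) (q i) ^ 2) := by
          rw [Real.dist_eq, Real.sqrt_sq_eq_abs, abs_abs]
      _ ≤ _ := Real.sqrt_le_sqrt h1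
  have hA : (1:ℝ) ≤ (a i : ℝ) - (a'' i : ℝ) := by
    have : (a'' i : ℝ) ≤ (a i : ℝ) - 1 := by exact_mod_cast hi
    linarith
  have hxi : (x i : ℝ) ≤ (δ:ℝ) := by exact_mod_cast (hx i).2
  have hℓ1' : (1:ℝ) ≤ (ℓ:ℝ) := by exact_mod_cast hℓ1
  have hpq : 2 * r * (1 + ε) < q i - p i := by
    rw [hp, hq]
    simp only [if_pos rfl, if_true, eq_self_iff_true]
    have hεx : ε * (x i : ℝ) ≤ ε * δ := by
      exact mul_le_mul_of_nonneg_left hxi hεpos.le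
    have hεℓ : ε * 1 ≤ ε * (ℓ:ℝ) := mul_le_mul_of_nonneg_left hℓ1' hεpos.le
    rw [hr] at *
    nlinarith
  have : q i - p i ≤ |p i - q i| := by
    rw [abs_sub_comm]
    exact le_abs_self _
  linarith
end

section
/- Let d ≥ 2 and δ ≥ 1 be integers, r = 1/4, ε = r²/((d-1)δ²). Let a, a'' ∈ ℤᵈ and suppose there exists j ≠ i with a''[j] ≠ a[j]. Then for any x ∈ {1,…,δ}ᵈ and ℓ ∈ {1,…,δ}, the Euclidean distance between p = a'' + ε·x and q = a + ((1-ε)·2r + εℓ)·eᵢ is strictly greater than 2r(1+ε). -/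
theorem stmt13 (d δ : ℕ) (hd : 2 ≤ d) (hδ : 1 ≤ δ) (r ε : ℝ)
    (hr : r = 1 / 4) (hε : ε = r ^ 2 / (((d : ℝ) - 1) * (δ : ℝ) ^ 2))
    (a a'' : Fin d → ℤ) (i : Fin d)
    (hj : ∃ j, j ≠ i ∧ a'' j ≠ a j)
    (x : Fin d → ℕ) (ℓ : ℕ)
    (hx : ∀ j, 1 ≤ x j ∧ x j ≤ δ) (hℓ1 : 1 ≤ ℓ) (hℓδ : ℓ ≤ δ)
    (p q : EuclideanSpace ℝ (Fin d))
    (hp : p = fun j => (a'' j : ℝ) + ε * (x j : ℝ))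
    (hq : q = fun j => if j = i then (a j : ℝ) + ((1 - ε) * (2 * r) + ε * ℓ) else (a j : ℝ)) :
    2 * r * (1 + ε) < dist p q := by
  obtain ⟨j, hji, hja⟩ := hj
  -- coordinate bound
  have hcoord : dist (p j) (q j) ≤ dist p q := by
    rw [EuclideanSpace.dist_eq]
    have h1 : dist (p j) (q j) ^ 2 ≤ ∑ k, dist (p k) (q k) ^ 2 :=
      Finset.single_le_sum (f := fun k => dist (p k) (q k) ^ 2)
        (fun k _ => sq_nonneg _) (Finset.mem_univ j)
    calc dist (p j) (q j) = Real.sqrt (dist (p j) (q j) ^ 2) := by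
            rw [Real.sqrt_sq dist_nonneg]
      _ ≤ Real.sqrt (∑ k, dist (p k) (q k) ^ 2) := Real.sqrt_le_sqrt h1
  -- numeric facts
  have hd1 : (1 : ℝ) ≤ (d : ℝ) - 1 := by
    have : (2 : ℝ) ≤ (d : ℝ) := by exact_mod_cast hd
    linarith
  have hδ1 : (1 : ℝ) ≤ (δ : ℝ) := by exact_mod_cast hδ
  have hεpos : 0 < ε := by
    rw [hε, hr]; positivity
  have hεδ : ε * δ ≤ r ^ 2 := by
    rw [hε]
    rw [div_mul_eq_mul_div, div_le_iff₀ (by positivity)]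
    have : (δ : ℝ) ≤ ((d : ℝ) - 1) * (δ : ℝ) ^ 2 := by nlinarith
    nlinarith [sq_nonneg r]
  have hεle : ε ≤ r ^ 2 := by
    have := hεδ
    nlinarith
  -- |p j - q j| ≥ 1 - ε δ
  have hpj : p j = (a'' j : ℝ) + ε * (x j : ℝ) := by rw [hp]
  have hqj : q j = (a j : ℝ) := by rw [hq]; simp [hji]
  have hint : (1 : ℝ) ≤ |(a'' j : ℝ) - (a j : ℝ)| := by
    have : a'' j - a j ≠ 0 := sub_ne_zero.mpr hja
    have h1 : (1 : ℤ) ≤ |a'' j - a j| := Int.one_le_abs this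
    calc (1 : ℝ) ≤ (|a'' j - a j| : ℤ) := by exact_mod_cast h1
      _ = |(a'' j : ℝ) - (a j : ℝ)| := by push_cast [Int.cast_abs]; ring_nf
  have hxj : (0:ℝ) ≤ (x j : ℝ) ∧ (x j : ℝ) ≤ (δ : ℝ) := by
    constructor
    · positivity
    · exact_mod_cast (hx j).2
  have hdistj : 1 - ε * δ ≤ dist (p j) (q j) := by
    rw [Real.dist_eq, hpj, hqj]
    have h2 : |(a'' j : ℝ) - (a j : ℝ)| - |ε * (x j : ℝ)| ≤ |(a'' j : ℝ) + ε * (x j : ℝ) - (a j : ℝ)| := by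
      have := abs_sub_abs_le_abs_sub ((a'' j : ℝ) - (a j : ℝ)) (-(ε * (x j : ℝ)))
      simp only [abs_neg, sub_neg_eq_add] at this
      calc |(a'' j : ℝ) - (a j : ℝ)| - |ε * (x j : ℝ)|
          ≤ |(a'' j : ℝ) - (a j : ℝ) + ε * (x j : ℝ)| := this
        _ = |(a'' j : ℝ) + ε * (x j : ℝ) - (a j : ℝ)| := by ring_nf
    have h3 : |ε * (x j : ℝ)| ≤ ε * δ := by
      rw [abs_of_nonneg (by positivity)]
      exact mul_le_mul_of_nonneg_left hxj.2 hεpos.le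
    linarith
  have hεδ' : ε * δ ≤ r ^ 2 := hεδ
  -- final: 2r(1+ε) < 1 - εδ
  have hfinal : 2 * r * (1 + ε) < 1 - ε * δ := by
    rw [hr] at *
    nlinarith
  linarith
end

section
/- Let d ≥ 2 and δ ≥ 1 be integers, r = 1/4, ε = r²/((d-1)δ²). Let a ∈ ℝᵈ, i ∈ {1,…,d}, x ∈ {1,…,δ}ᵈ, and ℓ ∈ {1,…,δ}. Then the Euclidean distance between the border point B⁺ = a + r(1-ε)·eᵢ + 2εδ·(𝟙-eᵢ) and the secondary point S = (a - eᵢ) + ((1-ε)·2r + εℓ)·eᵢ is strictly greater than 2r(1+ε). -/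
theorem stmt15 (d δ : ℕ) (hd : 2 ≤ d) (hδ : 1 ≤ δ) (r ε : ℝ)
    (hr : r = 1 / 4) (hε : ε = r ^ 2 / (((d : ℝ) - 1) * (δ : ℝ) ^ 2))
    (a : EuclideanSpace ℝ (Fin d)) (i : Fin d) (ℓ : ℕ)
    (hℓ1 : 1 ≤ ℓ) (hℓδ : ℓ ≤ δ)
    (Bp S : EuclideanSpace ℝ (Fin d))
    (hBp : Bp = fun j => if j = i then a j + r * (1 - ε) else a j + 2 * ε * δ)
    (hS : S = fun j => if j = i then (a j - 1) + ((1 - ε) * (2 * r) + ε * ℓ) else a j) :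
    2 * r * (1 + ε) < dist Bp S := by
  have hd1 : (1:ℝ) ≤ (d:ℝ) - 1 := by
    have : (2:ℝ) ≤ (d:ℝ) := by exact_mod_cast hd
    linarith
  have hδ1 : (1:ℝ) ≤ (δ:ℝ) := by exact_mod_cast hδ
  have hℓδ' : (ℓ:ℝ) ≤ (δ:ℝ) := by exact_mod_cast hℓδ
  have hℓ1' : (1:ℝ) ≤ (ℓ:ℝ) := by exact_mod_cast hℓ1
  have hden : (1:ℝ) ≤ ((d:ℝ) - 1) * (δ:ℝ) ^ 2 := by nlinarith
  have hεpos : 0 < ε := by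
    rw [hε, hr]
    positivity
  have hεℓ : ε * ℓ ≤ 1 / 16 := by
    rw [hε, hr]
    rw [div_mul_eq_mul_div, div_le_iff₀ (by linarith)]
    nlinarith
  have hε16 : ε ≤ 1 / 16 := by
    calc ε = ε * 1 := by ring
    _ ≤ ε * ℓ := by nlinarith
    _ ≤ 1 / 16 := hεℓ
  have hcomp : |Bp i - S i| ≤ dist Bp S := by
    rw [EuclideanSpace.dist_eq]
    have h1 : |Bp i - S i| = Real.sqrt ((Bp i - S i) ^ 2) := (Real.sqrt_sq_eq_abs _).symm
    rw [h1]
    apply Real.sqrt_le_sqrt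
    have := Finset.single_le_sum (f := fun j => (Bp j - S j) ^ 2)
      (fun j _ => sq_nonneg _) (Finset.mem_univ i)
    simpa [dist_eq_norm, Real.dist_eq] using this
  have hval : Bp i - S i = 1 - r * (1 - ε) - ε * ℓ := by
    rw [hBp, hS]; simp; ring
  have hpos : 2 * r * (1 + ε) < Bp i - S i := by
    rw [hval, hr]; nlinarith
  calc 2 * r * (1 + ε) < Bp i - S i := hpos
  _ ≤ |Bp i - S i| := le_abs_self _
  _ ≤ dist Bp S := hcomp
end
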